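/- The power graph of the locally dihedral group D_{2^∞} is isomorphic (as a graph) to the commuting graph of the infinite dihedral group D_∞; moreover, both groups have power graph not equal to commuting graph. -/

import Mathlib

open Subgroup

/-- The power graph of a group: `x ~ y` iff `x ≠ y` and one is a power of the other. -/
def powGraph (G : Type*) [Group G] : SimpleGraph G where
  Adj x y := x ≠ y ∧ (x ∈ zpowers y ∨ y ∈ zpowers x)
  symm := by constructor; rintro x y ⟨h1, h2⟩; exact ⟨h1.symm, h2.symm⟩
  loopless := by constructor; rintro x ⟨h1, _⟩; exact h1 rfl

/-- The enhanced power graph: `x ~ y` iff `x ≠ y` and `⟨x, y⟩` is cyclic. -/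
def epowGraph (G : Type*) [Group G] : SimpleGraph G where
  Adj x y := x ≠ y ∧ IsCyclic (closure ({x, y} : Set G))
  symm := by
    constructor
    rintro x y ⟨h1, h2⟩
    refine ⟨h1.symm, ?_⟩
    rwa [Set.pair_comm y x]
  loopless := by constructor; rintro x ⟨h1, _⟩; exact h1 rfl

/-- The commuting graph: `x ~ y` iff `x ≠ y` and `x y = y x`. -/
def comGraph (G : Type*) [Group G] : SimpleGraph G where
  Adj x y := x ≠ y ∧ x * y = y * x
  symm := by constructor; rintro x y ⟨h1, h2⟩; exact ⟨h1.symm, h2.symm⟩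
  loopless := by constructor; rintro x ⟨h1, _⟩; exact h1 rfl

/-- `G` has a subgroup isomorphic to `H`. -/
def HasSubgroupIso (G : Type*) [Group G] (H : Type*) [Group H] : Prop :=
  ∃ K : Subgroup G, Nonempty (K ≃* H)

/-- The Prüfer 2-group, realised as the subgroup of `ℂˣ` of `2 ^ n`-th roots of unity. -/
def Prufer2 : Subgroup ℂˣ where
  carrier := {z | ∃ n : ℕ, z ^ (2 ^ n) = 1}
  one_mem' := ⟨0, one_pow _⟩
  inv_mem' := by rintro z ⟨n, hn⟩; exact ⟨n, by rw [inv_pow, hn, inv_one]⟩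
  mul_mem' := by
    rintro z w ⟨n, hn⟩ ⟨m, hm⟩
    refine ⟨n + m, ?_⟩
    rw [mul_pow, pow_add, pow_mul, hn, one_pow, one_mul, mul_comm (2 ^ n) (2 ^ m),
      pow_mul, hm, one_pow]

/-! The power graph of `D` and the commuting graph of `D_∞` have the same shape: a subgroup is a
clique, the identity is adjacent to every vertex, and there are no other edges. In `D` the
subgroup is `C`, whose elements are pairwise powers of one another: their orders are powers of
`2`, and a complex root of unity whose order divides that of `ζ` is a power of `ζ`. Every element
of `D ∖ C` is an involution, whose only powers are `1` and itself. In `D_∞` the subgroup is the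
rotations, and a reflection commutes only with `1` and itself. In both cases the subgroup and its
complement are countably infinite, so a bijection matching the subgroups and fixing `1` is a graph
isomorphism.

A commuting pair that are not powers of each other separates the power graph from the commuting
graph: `s` and `t * s` for the involution `t` of `C`, and `r 2` and `r 3` in `D_∞`. -/

def cliqueWithApex {α : Type*} (A : Set α) (o : α) : SimpleGraph α where
  Adj x y := x ≠ y ∧ ((x ∈ A ∧ y ∈ A) ∨ x = o ∨ y = o)
  symm := by constructor; rintro x y ⟨hne, h⟩; exact ⟨hne.symm, by tauto⟩
  loopless := by constructor; rintro x ⟨hne, _⟩; exact hne rfl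

namespace cliqueWithApex

variable {α β : Type*} {A : Set α} {B : Set β} {o : α} {o' : β}

def isoOfEquiv (F : α ≃ β) (hF : ∀ x, F x ∈ B ↔ x ∈ A) (ho : F o = o') :
    cliqueWithApex A o ≃g cliqueWithApex B o' where
  toEquiv := F
  map_rel_iff' := by
    subst ho
    simp [cliqueWithApex, hF]

lemma nonempty_iso (ho : o ∈ A) (ho' : o' ∈ B) (eA : A ≃ B) (eAc : ↥Aᶜ ≃ ↥Bᶜ) :
    Nonempty (cliqueWithApex A o ≃g cliqueWithApex B o') := by
  classical
  let eA' := eA.trans (Equiv.swap (eA ⟨o, ho⟩) ⟨o', ho'⟩)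
  let F := (Equiv.Set.sumCompl A).symm.trans ((eA'.sumCongr eAc).trans (Equiv.Set.sumCompl B))
  refine ⟨isoOfEquiv F (fun x => ?_) ?_⟩
  · by_cases hx : x ∈ A
    · simp [F, Equiv.Set.sumCompl_symm_apply_of_mem hx, hx]
    · simp only [F, Equiv.trans_apply, Equiv.Set.sumCompl_symm_apply_of_notMem hx,
        Equiv.sumCongr_apply, Sum.map_inr, Equiv.Set.sumCompl_apply_inr, hx, iff_false]
      exact (eAc ⟨x, hx⟩).2
  · simp [F, eA', Equiv.Set.sumCompl_symm_apply_of_mem ho]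

end cliqueWithApex

lemma mem_zpowers_iff_of_injective {G H : Type*} [Group G] [Group H] {f : G →* H}
    (hf : Function.Injective f) {x y : G} : f x ∈ zpowers (f y) ↔ x ∈ zpowers y := by
  rw [← MonoidHom.map_zpowers, mem_map_iff_mem hf]

lemma mem_zpowers_iff_of_sq_eq_one {G : Type*} [Group G] {x y : G} (hx : x ^ 2 = 1) :
    y ∈ zpowers x ↔ y = 1 ∨ y = x := by
  refine ⟨fun hy => ?_, by rintro (rfl | rfl) <;> simp [mem_zpowers]⟩
  obtain ⟨k, rfl⟩ := mem_zpowers_iff.mp hy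
  rcases Int.even_or_odd' k with ⟨m, rfl | rfl⟩
  · simp [zpow_mul, hx]
  · simp [zpow_add, zpow_mul, hx]

lemma powGraph_eq_cliqueWithApex {G : Type*} [Group G] (C : Subgroup G)
    (hC : ∀ a ∈ C, ∀ b ∈ C, a ∈ zpowers b ∨ b ∈ zpowers a)
    (hinv : ∀ x, x ∉ C → x ^ 2 = 1) : powGraph G = cliqueWithApex C 1 := by
  have hpow {x y : G} (hne : x ≠ y) (hxy : x ∈ zpowers y) : (x ∈ C ∧ y ∈ C) ∨ x = 1 := by
    by_cases hy : y ∈ C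
    · exact Or.inl ⟨zpowers_le.mpr hy hxy, hy⟩
    · exact Or.inr (((mem_zpowers_iff_of_sq_eq_one (hinv y hy)).mp hxy).resolve_right hne)
  ext x y
  constructor
  · rintro ⟨hne, hxy | hyx⟩
    · exact ⟨hne, (hpow hne hxy).imp_right Or.inl⟩
    · exact ⟨hne, (hpow hne.symm hyx).imp And.symm Or.inr⟩
  · rintro ⟨hne, ⟨hx, hy⟩ | rfl | rfl⟩
    · exact ⟨hne, hC x hx y hy⟩
    · exact ⟨hne, Or.inl (one_mem _)⟩
    · exact ⟨hne, Or.inr (one_mem _)⟩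

lemma powGraph_ne_comGraph_of_commute {G : Type*} [Group G] {x y : G} (hxy : Commute x y)
    (hx : x ∉ zpowers y) (hy : y ∉ zpowers x) : powGraph G ≠ comGraph G := by
  intro h
  have hne : x ≠ y := by rintro rfl; exact hx (mem_zpowers x)
  have hadj : (powGraph G).Adj x y := h ▸ ⟨hne, hxy⟩
  exact hadj.2.elim hx hy

section Involution

variable {G : Type*} [Group G] {C : Subgroup G} {s : G}

lemma mem_or_mul_mem_of_closure_union_eq_top (hs : s ^ 2 = 1)
    (hnorm : ∀ c ∈ C, s * c * s ∈ C) (hgen : closure ((C : Set G) ∪ {s}) = ⊤) (x : G) :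
    x ∈ C ∨ x * s ∈ C := by
  have hsinv : s⁻¹ = s := inv_eq_of_mul_eq_one_right (by rw [← sq, hs])
  have hx : x ∈ closure ((C : Set G) ∪ {s}) := hgen ▸ mem_top x
  induction hx using closure_induction with
  | mem y hy =>
    rcases hy with hy | rfl
    · exact Or.inl hy
    · exact Or.inr (by rw [← sq, hs]; exact one_mem C)
  | one => exact Or.inl (one_mem C)
  | mul x y _ _ hx hy =>
    rcases hx with hx | hx <;> rcases hy with hy | hy
    · exact Or.inl (mul_mem hx hy)
    · exact Or.inr (by rw [mul_assoc]; exact mul_mem hx hy)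
    · have : x * y * s = x * s * (s⁻¹ * y * s) := by group
      rw [hsinv] at this
      exact Or.inr (this ▸ mul_mem hx (hnorm y hy))
    · have : x * y = x * s * (s⁻¹ * (y * s) * s⁻¹) := by group
      rw [hsinv] at this
      exact Or.inl (this ▸ mul_mem hx (hnorm _ hy))
  | inv x _ hx =>
    rcases hx with hx | hx
    · exact Or.inl (inv_mem hx)
    · have : x⁻¹ * s = s * (x * s)⁻¹ * s := by group
      exact Or.inr (this ▸ hnorm _ (inv_mem hx))

lemma sq_eq_one_of_mul_mem (hs : s ^ 2 = 1) (hconj : ∀ c ∈ C, s * c * s = c⁻¹) {x : G}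
    (hx : x * s ∈ C) : x ^ 2 = 1 := by
  have hinv : x⁻¹ = x :=
    calc x⁻¹ = s * (x * s)⁻¹ := by group
      _ = s * (s * (x * s) * s) := by rw [hconj _ hx]
      _ = s ^ 2 * x * s ^ 2 := by simp only [sq, mul_assoc]
      _ = x := by rw [hs, one_mul, mul_one]
  rw [sq, mul_eq_one_iff_eq_inv, hinv]

lemma notMem_of_conj_eq_inv (hs : s ^ 2 = 1) (hconj : ∀ c ∈ C, s * c * s = c⁻¹)
    (hcomm : ∀ a ∈ C, ∀ b ∈ C, Commute a b) {c : G} (hc : c ∈ C) (hc2 : c ^ 2 ≠ 1) :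
    s ∉ C := by
  intro hsC
  have h := hconj c hc
  rw [(hcomm s hsC c hc).eq, mul_assoc, ← sq, hs, mul_one] at h
  exact hc2 (by rw [sq]; nth_rewrite 2 [h]; exact mul_inv_cancel c)

def complEquivOfMulMem (hs : s ^ 2 = 1) (hsC : s ∉ C) (hcoset : ∀ x, x ∈ C ∨ x * s ∈ C) :
    ↥(C : Set G)ᶜ ≃ C where
  toFun x := ⟨x * s, (hcoset x).resolve_left x.2⟩
  invFun c := ⟨c * s, fun h => hsC (by simpa using mul_mem (inv_mem c.2) h)⟩
  left_inv x := Subtype.ext (by simp [mul_assoc, ← sq, hs])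
  right_inv c := Subtype.ext (by simp [mul_assoc, ← sq, hs])

lemma powGraph_ne_comGraph_of_conj_eq_inv (hs : s ^ 2 = 1) (hconj : ∀ c ∈ C, s * c * s = c⁻¹)
    (hsC : s ∉ C) {t : G} (htC : t ∈ C) (ht1 : t ≠ 1) (ht : t ^ 2 = 1) :
    powGraph G ≠ comGraph G := by
  have hts : (t * s) ^ 2 = 1 :=
    sq_eq_one_of_mul_mem hs hconj (by rwa [mul_assoc, ← sq, hs, mul_one])
  have htinv : t⁻¹ = t := inv_eq_of_mul_eq_one_right (by rw [← sq, ht])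
  refine powGraph_ne_comGraph_of_commute (x := s) (y := t * s) ?_ ?_ ?_
  · show s * (t * s) = t * s * s
    rw [← mul_assoc, hconj t htC, htinv, mul_assoc, ← sq, hs, mul_one]
  · rw [mem_zpowers_iff_of_sq_eq_one hts]
    rintro (rfl | h)
    · exact hsC (one_mem C)
    · exact ht1 (by simpa using h)
  · rw [mem_zpowers_iff_of_sq_eq_one hs]
    rintro (h | h)
    · exact hsC (eq_inv_of_mul_eq_one_right h ▸ inv_mem htC)
    · exact ht1 (by simpa using h)

end Involution

lemma Units.mem_zpowers_of_orderOf_dvd {R : Type*} [CommRing R] [IsDomain R] {x y : Rˣ}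
    (hy : 0 < orderOf y) (h : orderOf x ∣ orderOf y) : x ∈ zpowers y := by
  have : NeZero (orderOf y) := ⟨hy.ne'⟩
  rw [(IsPrimitiveRoot.orderOf y).zpowers_eq, mem_rootsOfUnity]
  exact orderOf_dvd_iff_pow_eq_one.mp h

namespace Prufer2

lemma exists_orderOf_eq_two_pow {x : ℂˣ} (hx : x ∈ Prufer2) : ∃ a : ℕ, orderOf x = 2 ^ a := by
  obtain ⟨n, hn⟩ := hx
  obtain ⟨a, -, ha⟩ := (Nat.dvd_prime_pow Nat.prime_two).mp (orderOf_dvd_of_pow_eq_one hn)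
  exact ⟨a, ha⟩

lemma mem_zpowers_or_mem_zpowers {x y : ℂˣ} (hx : x ∈ Prufer2) (hy : y ∈ Prufer2) :
    x ∈ zpowers y ∨ y ∈ zpowers x := by
  obtain ⟨a, ha⟩ := exists_orderOf_eq_two_pow hx
  obtain ⟨b, hb⟩ := exists_orderOf_eq_two_pow hy
  rcases le_total a b with hab | hab
  · refine Or.inl (Units.mem_zpowers_of_orderOf_dvd ?_ ?_) <;> simp [ha, hb, pow_dvd_pow 2 hab]
  · refine Or.inr (Units.mem_zpowers_of_orderOf_dvd ?_ ?_) <;> simp [ha, hb, pow_dvd_pow 2 hab]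

instance : Countable Prufer2 := by
  have h : (Prufer2 : Set ℂˣ) = ⋃ n : ℕ, (rootsOfUnity (2 ^ n) ℂ : Set ℂˣ) := by
    ext z
    simp [Prufer2, mem_rootsOfUnity]
  have hfin (n : ℕ) : (rootsOfUnity (2 ^ n) ℂ : Set ℂˣ).Finite :=
    have : NeZero (2 ^ n) := ⟨by positivity⟩
    Set.finite_coe_iff.mp (inferInstanceAs (Finite (rootsOfUnity (2 ^ n) ℂ)))
  exact Set.countable_coe_iff.mpr (h ▸ Set.countable_iUnion fun n => (hfin n).countable)

instance : Infinite Prufer2 := by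
  have hζ (n : ℕ) := (Complex.isPrimitiveRoot_exp (2 ^ n) (by positivity)).isUnit_unit
    (by positivity)
  refine Infinite.of_injective (fun n => (⟨_, n, (hζ n).pow_eq_one⟩ : Prufer2)) fun a b hab => ?_
  have := congrArg (fun z : Prufer2 => orderOf (z : ℂˣ)) hab
  simp only [← (hζ _).eq_orderOf] at this
  exact Nat.pow_right_injective le_rfl this

lemma exists_sq_ne_one_and_pow_four_eq_one : ∃ z : Prufer2, z ^ 2 ≠ 1 ∧ z ^ 4 = 1 := by
  have hI : Units.mk0 Complex.I Complex.I_ne_zero ^ 2 ^ 2 = 1 := by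
    ext
    simp [Complex.I_pow_four]
  refine ⟨⟨_, 2, hI⟩, fun h => ?_, Subtype.ext hI⟩
  have := congrArg (fun z : Prufer2 => ((z : ℂˣ) : ℂ)) h
  norm_num at this

end Prufer2

section LocallyDihedral

variable {G : Type*} [Group G] {C : Subgroup G}

lemma mem_zpowers_or_mem_zpowers_of_mulEquiv_prufer2 (e : C ≃* Prufer2) {a b : G} (ha : a ∈ C)
    (hb : b ∈ C) : a ∈ zpowers b ∨ b ∈ zpowers a := by
  let f : C →* ℂˣ := Prufer2.subtype.comp e.toMonoidHom
  have hf : Function.Injective f := Subtype.val_injective.comp e.injective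
  have key : ∀ u v : C, f u ∈ zpowers (f v) → (u : G) ∈ zpowers (v : G) := fun u v h =>
    (mem_zpowers_iff_of_injective C.subtype_injective).mpr
      ((mem_zpowers_iff_of_injective hf).mp h)
  exact (Prufer2.mem_zpowers_or_mem_zpowers (e ⟨a, ha⟩).2 (e ⟨b, hb⟩).2).imp (key _ _) (key _ _)

lemma commute_of_mulEquiv_prufer2 (e : C ≃* Prufer2) {a b : G} (ha : a ∈ C) (hb : b ∈ C) :
    Commute a b := by
  simpa using ((Commute.all (e ⟨a, ha⟩) (e ⟨b, hb⟩)).map e.symm).map C.subtype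

end LocallyDihedral

namespace DihedralGroup

lemma r_eq_one_iff {n : ℕ} {i : ZMod n} : r i = 1 ↔ i = 0 := by
  rw [← r_zero, r.injEq]

lemma sr_ne_one {n : ℕ} (i : ZMod n) : sr i ≠ 1 := by
  rw [one_def]; exact fun h => by cases h

lemma comGraph_zero_eq_cliqueWithApex :
    comGraph (DihedralGroup 0) = cliqueWithApex (Set.range r) 1 := by
  ext x y
  simp only [comGraph, cliqueWithApex]
  rcases x with i | i <;> rcases y with j | j <;>
    simp only [ne_eq, r.injEq, sr.injEq, reduceCtorEq, r_mul_r, r_mul_sr, sr_mul_r, sr_mul_sr,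
      add_comm, Set.mem_range, exists_eq, exists_const, r_eq_one_iff, sr_ne_one] <;>
    grind

lemma range_sr_eq_compl_range_r {n : ℕ} : Set.range (sr : ZMod n → _) = (Set.range r)ᶜ := by
  ext x
  rcases x with i | i <;> simp

lemma nonempty_cliqueWithApex_iso_comGraph_zero {α : Type*} {A : Set α} {o : α} (ho : o ∈ A)
    (eA : A ≃ ℤ) (eAc : ↥Aᶜ ≃ ℤ) :
    Nonempty (cliqueWithApex A o ≃g comGraph (DihedralGroup 0)) := by
  rw [comGraph_zero_eq_cliqueWithApex]
  exact cliqueWithApex.nonempty_iso ho ⟨0, rfl⟩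
    (eA.trans (Equiv.ofInjective (r : ZMod 0 → _) fun _ _ => r.inj))
    (eAc.trans ((Equiv.ofInjective (sr : ZMod 0 → _) fun _ _ => sr.inj).trans
      (Equiv.setCongr range_sr_eq_compl_range_r)))

-- `ZMod 0` is definitionally `ℤ`, so the exponent `k` is itself the divisibility witness.
lemma r_mem_zpowers_r_iff {i j : ZMod 0} : r i ∈ zpowers (r j) ↔ j ∣ i := by
  simp only [mem_zpowers_iff, r_zpow, r.injEq]
  exact ⟨fun ⟨k, hk⟩ => ⟨k, hk.symm⟩, fun ⟨k, hk⟩ => ⟨k, hk.symm⟩⟩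

lemma powGraph_zero_ne_comGraph_zero :
    powGraph (DihedralGroup 0) ≠ comGraph (DihedralGroup 0) := by
  refine powGraph_ne_comGraph_of_commute (x := r 2) (y := r 3) ?_ ?_ ?_
  · simp only [Commute, SemiconjBy, r_mul_r, add_comm]
  · rw [r_mem_zpowers_r_iff]
    change ¬(3 : ℤ) ∣ 2
    decide
  · rw [r_mem_zpowers_r_iff]
    change ¬(2 : ℤ) ∣ 3
    decide

end DihedralGroup

/-- The power graph of the locally dihedral group `D_{2^∞}` is isomorphic to the commuting
graph of the infinite dihedral group `D_∞` (realised as `DihedralGroup 0`); moreover both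
groups have power graph different from their commuting graph. -/
theorem powGraph_locally_dihedral_iso_comGraph_infinite_dihedral
    {D : Type*} [Group D] (C : Subgroup D) (hC : Nonempty (C ≃* Prufer2))
    (s : D) (hs : s ^ 2 = 1) (hconj : ∀ c ∈ C, s * c * s = c⁻¹)
    (hgen : Subgroup.closure ((C : Set D) ∪ {s}) = ⊤) :
    Nonempty (powGraph D ≃g comGraph (DihedralGroup 0)) ∧
      powGraph D ≠ comGraph D ∧
      powGraph (DihedralGroup 0) ≠ comGraph (DihedralGroup 0) := by
  obtain ⟨e⟩ := hC
  obtain ⟨z, hz2, hz4⟩ := Prufer2.exists_sq_ne_one_and_pow_four_eq_one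
  have hz_pow (n : ℕ) : ((e.symm z : C) : D) ^ n = 1 ↔ z ^ n = 1 := by
    simp [← SubgroupClass.coe_pow, ← map_pow]
  have hsC : s ∉ C := notMem_of_conj_eq_inv hs hconj
    (fun _ ha _ hb => commute_of_mulEquiv_prufer2 e ha hb) (e.symm z).2 (by rwa [ne_eq, hz_pow])
  have hcoset :=
    mem_or_mul_mem_of_closure_union_eq_top hs (fun c hc => hconj c hc ▸ inv_mem hc) hgen
  have hpow : powGraph D = cliqueWithApex C 1 :=
    powGraph_eq_cliqueWithApex C
      (fun _ ha _ hb => mem_zpowers_or_mem_zpowers_of_mulEquiv_prufer2 e ha hb)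
      (fun x hx => sq_eq_one_of_mul_mem hs hconj ((hcoset x).resolve_left hx))
  let eC : C ≃ ℤ := e.toEquiv.trans nonempty_equiv_of_countable.some
  refine ⟨hpow ▸ DihedralGroup.nonempty_cliqueWithApex_iso_comGraph_zero (one_mem C) eC
      ((complEquivOfMulMem hs hsC hcoset).trans eC), ?_,
    DihedralGroup.powGraph_zero_ne_comGraph_zero⟩
  refine powGraph_ne_comGraph_of_conj_eq_inv hs hconj hsC (pow_mem (e.symm z).2 2)
    (by rwa [ne_eq, hz_pow]) ?_
  rwa [← pow_mul, hz_pow]
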